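/- Every finite Boolean lattice (the poset of subsets of a finite set, ordered by inclusion) admits a symmetric chain decomposition. -/

import Mathlib

/-- `rk` is a rank function exhibiting the finite poset `α` as graded of rank `n`. -/
def IsGraded {α : Type*} [PartialOrder α] (rk : α → ℕ) (n : ℕ) : Prop :=
  (∀ a b : α, a ⋖ b → rk b = rk a + 1) ∧
  (∀ a : α, (∀ b, ¬ b < a) → rk a = 0) ∧
  (∀ a : α, (∀ b, ¬ a < b) → rk a = n)

/-- The number of elements of rank `k`. -/
noncomputable def rankNum {α : Type*} [Fintype α] (rk : α → ℕ) (k : ℕ) : ℕ :=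
  Nat.card {a : α // rk a = k}

/-- A symmetric chain decomposition of a graded poset of rank `n`: a partition of the
elements into saturated chains (lists of consecutive covers) such that the ranks of the
minimum and the maximum of each chain sum to `n`. -/
def IsSCD {α : Type*} [PartialOrder α] (rk : α → ℕ) (n : ℕ) (𝒞 : Set (List α)) : Prop :=
  (∀ c ∈ 𝒞, c ≠ [] ∧ c.Chain' (· ⋖ ·) ∧
    ∀ x ∈ c.head?, ∀ y ∈ c.getLast?, rk x + rk y = n) ∧
  (∀ a : α, ∃! c, c ∈ 𝒞 ∧ a ∈ c)

/-!
De Bruijn–Tengbergen–Kruyswijk induction on the ground set. Given a symmetric chain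
decomposition of the subsets of `S` and `x ∉ S`, each chain `A₁ ⋖ ⋯ ⋖ Aₖ` gives two chains of
subsets of `insert x S`: `A₁ ⋖ ⋯ ⋖ Aₖ ⋖ insert x Aₖ` and `insert x A₁ ⋖ ⋯ ⋖ insert x Aₖ₋₁`
(dropped when `k = 1`). Both are symmetric for the rank one higher, and a subset `T` of
`insert x S` lies on exactly one of them, namely on one of the two children of the chain
through `T.erase x`; it cannot lie on both since `Aₖ` occurs only once in its chain.
-/

theorem List.IsChain.nodup_of_covBy {β : Type*} [Preorder β] {l : List β}
    (h : l.IsChain (· ⋖ ·)) : l.Nodup :=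
  (List.isChain_iff_pairwise.mp (h.imp fun _ _ => CovBy.lt)).imp ne_of_lt

namespace Finset

variable {α : Type*} [DecidableEq α]

theorem insert_covBy_insert {x : α} {s t : Finset α} (hx : x ∉ t) (h : s ⋖ t) :
    insert x s ⋖ insert x t := by
  obtain ⟨y, hy, rfl⟩ := covBy_iff_exists_insert.mp h
  refine covBy_iff_exists_insert.mpr ⟨y, ?_, insert_comm _ _ _⟩
  simp only [mem_insert, not_or] at hx ⊢
  exact ⟨Ne.symm hx.1, hy⟩

end Finset

section SymmetricChains

variable {α : Type*}

def IsSymmChain (n : ℕ) (c : List (Finset α)) : Prop :=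
  c ≠ [] ∧ c.IsChain (· ⋖ ·) ∧ ∀ s ∈ c.head?, ∀ t ∈ c.getLast?, s.card + t.card = n

def IsPowersetSCD (S : Finset α) (𝒞 : Set (List (Finset α))) : Prop :=
  (∀ c ∈ 𝒞, IsSymmChain S.card c ∧ ∀ s ∈ c, s ⊆ S) ∧ ∀ s ⊆ S, ∃! c, c ∈ 𝒞 ∧ s ∈ c

variable {S : Finset α} {𝒞 : Set (List (Finset α))} {x : α}

theorem IsPowersetSCD.notMem_of_mem (h : IsPowersetSCD S 𝒞) (hxS : x ∉ S) :
    ∀ c ∈ 𝒞, ∀ s ∈ c, x ∉ s :=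
  fun c hc s hs hxs => hxS ((h.1 c hc).2 s hs hxs)

variable [DecidableEq α]

theorem IsSymmChain.append_insert {n : ℕ} {d : List (Finset α)} {m : Finset α}
    (h : IsSymmChain n (d ++ [m])) (hx : x ∉ m) :
    IsSymmChain (n + 1) (d ++ [m, insert x m]) := by
  obtain ⟨-, hchain, hsum⟩ := h
  have hm : (d ++ [m]).getLast? = some m := List.getLast?_concat
  refine ⟨by simp, ?_, ?_⟩
  · rw [← List.singleton_append, ← List.append_assoc]
    refine hchain.append (List.isChain_singleton _) ?_
    simp only [hm, Option.mem_def, Option.some.injEq, List.head?_cons]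
    rintro _ rfl _ rfl
    exact Finset.covBy_insert hx
  · have hhead : (d ++ [m, insert x m]).head? = (d ++ [m]).head? := by cases d <;> rfl
    intro s hs t ht
    rw [hhead] at hs
    obtain rfl : insert x m = t := by simpa using ht
    rw [Finset.card_insert_of_notMem hx, ← add_assoc, hsum s hs m hm]

theorem IsSymmChain.map_insert {n : ℕ} {d : List (Finset α)} {m : Finset α}
    (h : IsSymmChain n (d ++ [m])) (hd : d ≠ []) (hx : ∀ s ∈ d, x ∉ s) :
    IsSymmChain (n + 1) (d.map (insert x)) := by
  obtain ⟨-, hchain, hsum⟩ := h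
  obtain ⟨e, l, rfl⟩ := List.eq_nil_or_concat' d |>.resolve_left hd
  have hlm : l ⋖ m := (List.isChain_append.mp hchain).2.2 l (by simp) m (by simp)
  have hhead : (e ++ [l] ++ [m]).head? = (e ++ [l]).head? := by cases e <;> rfl
  refine ⟨by simp, ?_, ?_⟩
  · exact (List.isChain_map _).mpr <| hchain.left_of_append.imp_of_mem_imp
      fun _ t _ ht hst => Finset.insert_covBy_insert (hx t ht) hst
  · intro s' hs' t ht
    obtain ⟨s, hs, rfl⟩ := Option.mem_map.mp (List.head?_map ▸ hs')
    obtain rfl : insert x l = t := by simpa using ht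
    have hsm := hsum s (hhead ▸ hs) m (by simp)
    have hlm_card := Nat.covBy_iff_add_one_eq.mp hlm.card_finset
    rw [Finset.card_insert_of_notMem (hx s (List.mem_of_mem_head? hs)),
      Finset.card_insert_of_notMem (hx l (by simp))]
    omega

def deBruijnStep (x : α) (𝒞 : Set (List (Finset α))) : Set (List (Finset α)) :=
  {l | ∃ d m, d ++ [m] ∈ 𝒞 ∧ l = d ++ [m, insert x m]} ∪
  {l | ∃ d m, d ++ [m] ∈ 𝒞 ∧ d ≠ [] ∧ l = d.map (insert x)}

theorem IsPowersetSCD.isSymmChain_of_mem_deBruijnStep (h : IsPowersetSCD S 𝒞) (hxS : x ∉ S)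
    {l : List (Finset α)} (hl : l ∈ deBruijnStep x 𝒞) :
    IsSymmChain (insert x S).card l ∧ ∀ s ∈ l, s ⊆ insert x S := by
  rw [Finset.card_insert_of_notMem hxS]
  rcases hl with ⟨d, m, hc, rfl⟩ | ⟨d, m, hc, hd, rfl⟩
  all_goals
    obtain ⟨hsymm, hsub⟩ := h.1 _ hc
    have hx := h.notMem_of_mem hxS _ hc
    simp only [List.mem_append, List.mem_singleton] at hsub hx
  · refine ⟨hsymm.append_insert (hx m (Or.inr rfl)), fun s hs => ?_⟩
    simp only [List.mem_append, List.mem_cons, List.not_mem_nil, or_false] at hs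
    rcases hs with hs | rfl | rfl
    · exact (hsub s (Or.inl hs)).trans (Finset.subset_insert _ _)
    · exact (hsub s (Or.inr rfl)).trans (Finset.subset_insert _ _)
    · exact Finset.insert_subset_insert x (hsub _ (Or.inr rfl))
  · refine ⟨hsymm.map_insert hd (fun s hs => hx s (Or.inl hs)), ?_⟩
    simp only [List.mem_map]
    rintro _ ⟨s, hs, rfl⟩
    exact Finset.insert_subset_insert x (hsub s (Or.inl hs))

theorem exists_erase_mem_of_mem_deBruijnStep (hx : ∀ c ∈ 𝒞, ∀ s ∈ c, x ∉ s)
    {l : List (Finset α)} (hl : l ∈ deBruijnStep x 𝒞) {s : Finset α} (hs : s ∈ l) :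
    ∃ d m, d ++ [m] ∈ 𝒞 ∧ s.erase x ∈ d ++ [m] ∧
      (l = d ++ [m, insert x m] ∨ l = d.map (insert x)) := by
  rcases hl with ⟨d, m, hc, rfl⟩ | ⟨d, m, hc, -, rfl⟩
  · refine ⟨d, m, hc, ?_, Or.inl rfl⟩
    have hs' : s ∈ d ++ [m] ∨ s = insert x m := by simpa [or_assoc] using hs
    rcases hs' with hs | rfl
    · rwa [Finset.erase_eq_of_notMem (hx _ hc s hs)]
    · rw [Finset.erase_insert (hx _ hc m (by simp))]
      simp
  · obtain ⟨t, ht, rfl⟩ := List.mem_map.mp hs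
    refine ⟨d, m, hc, ?_, Or.inr rfl⟩
    rw [Finset.erase_insert (hx _ hc t (by simp [ht]))]
    simp [ht]

theorem notMem_map_insert_of_mem_append_insert {d : List (Finset α)} {m s : Finset α}
    (hm : m ∉ d) (hx : ∀ t ∈ d ++ [m], x ∉ t) (hs : s ∈ d ++ [m, insert x m]) :
    s ∉ d.map (insert x) := by
  rintro hs'
  obtain ⟨t, ht, rfl⟩ := List.mem_map.mp hs'
  have htx : x ∉ t := hx t (by simp [ht])
  simp only [List.mem_append, List.mem_cons, List.not_mem_nil, or_false] at hs
  rcases hs with hs | hs | hs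
  · exact hx _ (by simp [hs]) (Finset.mem_insert_self x t)
  · exact hx m (by simp) (hs ▸ Finset.mem_insert_self x t)
  · have : t = m := by
      rw [← Finset.erase_insert htx, hs, Finset.erase_insert (hx m (by simp))]
    exact hm (this ▸ ht)

theorem IsPowersetSCD.existsUnique_mem_deBruijnStep (h : IsPowersetSCD S 𝒞) (hxS : x ∉ S)
    {s : Finset α} (hs : s ⊆ insert x S) : ∃! l, l ∈ deBruijnStep x 𝒞 ∧ s ∈ l := by
  have hx := h.notMem_of_mem hxS
  obtain ⟨c, ⟨hc, hsc⟩, hc_unique⟩ := h.2 (s.erase x) (Finset.subset_insert_iff.mp hs)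
  obtain ⟨d, m, rfl⟩ := (List.eq_nil_or_concat' c).resolve_left (h.1 c hc).1.1
  have hsplit : ∀ l ∈ deBruijnStep x 𝒞, s ∈ l →
      l = d ++ [m, insert x m] ∨ l = d.map (insert x) := by
    intro l hl hsl
    obtain ⟨d', m', hc', hsc', hl'⟩ := exists_erase_mem_of_mem_deBruijnStep hx hl hsl
    obtain ⟨rfl, rfl⟩ := List.append_singleton_inj.mp (hc_unique _ ⟨hc', hsc'⟩)
    exact hl'
  refine existsUnique_of_exists_of_unique ?_ ?_
  · by_cases hxs : x ∈ s
    · rw [← Finset.insert_erase hxs]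
      rcases List.mem_append.mp hsc with hsd | hsm
      · exact ⟨_, Or.inr ⟨d, m, hc, List.ne_nil_of_mem hsd, rfl⟩, List.mem_map_of_mem hsd⟩
      · exact ⟨_, Or.inl ⟨d, m, hc, rfl⟩, by simp [List.mem_singleton.mp hsm]⟩
    · rw [Finset.erase_eq_of_notMem hxs] at hsc
      exact ⟨_, Or.inl ⟨d, m, hc, rfl⟩, by simp at hsc ⊢; tauto⟩
  · have hm : m ∉ d := fun hmd =>
      (List.nodup_append.mp (h.1 _ hc).1.2.1.nodup_of_covBy).2.2 m hmd m (by simp) rfl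
    have hdisj := notMem_map_insert_of_mem_append_insert (s := s) hm (hx _ hc)
    rintro l₁ l₂ ⟨hl₁, hs₁⟩ ⟨hl₂, hs₂⟩
    rcases hsplit l₁ hl₁ hs₁ with rfl | rfl <;> rcases hsplit l₂ hl₂ hs₂ with rfl | rfl
    · rfl
    · exact absurd hs₂ (hdisj hs₁)
    · exact absurd hs₁ (hdisj hs₂)
    · rfl

theorem IsPowersetSCD.insert (h : IsPowersetSCD S 𝒞) (hxS : x ∉ S) :
    IsPowersetSCD (insert x S) (deBruijnStep x 𝒞) :=
  ⟨fun _ hl => h.isSymmChain_of_mem_deBruijnStep hxS hl,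
    fun _ hs => h.existsUnique_mem_deBruijnStep hxS hs⟩

theorem exists_isPowersetSCD (S : Finset α) : ∃ 𝒞, IsPowersetSCD S 𝒞 := by
  induction S using Finset.induction_on with
  | empty =>
    refine ⟨{[∅]}, ?_, fun s hs => ?_⟩
    · rintro c rfl
      exact ⟨⟨by simp, List.isChain_singleton _, by simp⟩, by simp⟩
    · obtain rfl := Finset.subset_empty.mp hs
      exact ⟨[∅], by simp, by simp⟩
  | insert x S hxS ih =>
    obtain ⟨𝒞, h⟩ := ih
    exact ⟨_, h.insert hxS⟩

end SymmetricChains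

theorem stmt_7_general (α : Type*) [Fintype α] :
    ∃ 𝒞 : Set (List (Finset α)),
      IsSCD (fun s : Finset α => s.card) (Fintype.card α) 𝒞 := by
  classical
  obtain ⟨𝒞, hchains, hcover⟩ := exists_isPowersetSCD (Finset.univ : Finset α)
  refine ⟨𝒞, fun c hc => ?_, fun s => hcover s (Finset.subset_univ s)⟩
  exact Finset.card_univ (α := α) ▸ (hchains c hc).1

/-- Every finite Boolean lattice (the poset of subsets of a finite set ordered by inclusion,
graded by cardinality) admits a symmetric chain decomposition. -/
theorem stmt_7 (α : Type*) [Fintype α] [DecidableEq α] :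
    ∃ 𝒞 : Set (List (Finset α)),
      IsSCD (fun s : Finset α => s.card) (Fintype.card α) 𝒞 :=
  stmt_7_general α
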